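/- First step of Proposition 3.4 (equation (3.8)): let f : ℂ → S^n be a conformal minimal immersion with ⟨Ω, Ω⟩ ≡ 0. If c ∈ ℂ and E ∈ ℝ^{n+1} is a constant vector such that c Ω(z) + c̄ Ω̄(z) + E^⊥(z) = 0 for all z ∈ ℂ, then at every point of ℂ one has c N_z Ω − 2 e^{−2ρ} ⟨E, f_{z̄}⟩ Ω = 0 and c̄ ⟨Ω̄, Ω⟩ + ⟨E, Ω⟩ = 0. -/

import Mathlib

open Complex

noncomputable section

/-- Wirtinger derivative `∂_z` of a map `ℂ → ℂ`. -/
def wirtZ (g : ℂ → ℂ) (z : ℂ) : ℂ :=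
  (1 / 2 : ℂ) * (fderiv ℝ g z 1 - Complex.I * fderiv ℝ g z Complex.I)

/-- Wirtinger derivative `∂_z̄` of a map `ℂ → ℂ`. -/
def wirtZbar (g : ℂ → ℂ) (z : ℂ) : ℂ :=
  (1 / 2 : ℂ) * (fderiv ℝ g z 1 + Complex.I * fderiv ℝ g z Complex.I)

/-- Componentwise `∂_z` for vector-valued maps. -/
def WZ {m : ℕ} (g : ℂ → Fin m → ℂ) : ℂ → Fin m → ℂ :=
  fun z i => wirtZ (fun w => g w i) z

/-- Componentwise `∂_z̄` for vector-valued maps. -/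
def WZb {m : ℕ} (g : ℂ → Fin m → ℂ) : ℂ → Fin m → ℂ :=
  fun z i => wirtZbar (fun w => g w i) z

/-- Complex-bilinear (non-conjugating) pairing. -/
def pairC {m : ℕ} (u v : Fin m → ℂ) : ℂ := ∑ i, u i * v i

/-- Componentwise complex conjugation. -/
def conjV {m : ℕ} (u : Fin m → ℂ) : Fin m → ℂ := fun i => (starRingEnd ℂ) (u i)

/-- Complexification of a real vector. -/
def cV {m : ℕ} (u : Fin m → ℝ) : Fin m → ℂ := fun i => (u i : ℂ)

/-- Complexification of a real-vector-valued map. -/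
def Fc {m : ℕ} (f : ℂ → Fin m → ℝ) : ℂ → Fin m → ℂ := fun z => cV (f z)

/-- `∂_z` of (the complexification of) a real-valued function. -/
def dZ (ρ : ℂ → ℝ) (z : ℂ) : ℂ := wirtZ (fun w => ((ρ w : ℝ) : ℂ)) z

/-- `f : ℂ → S^n ⊂ ℝ^{n+1}` is a conformal minimal immersion with conformal factor `ρ`:
`⟨f_z, f_z⟩ = 0`, `⟨f_z, f̄_z⟩ = (1/2) e^{2ρ}`, and `f_{z z̄} = −(1/2) e^{2ρ} f`. -/
def IsConfMinImm {m : ℕ} (f : ℂ → Fin m → ℝ) (ρ : ℂ → ℝ) : Prop :=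
  ContDiff ℝ (⊤ : ℕ∞) f ∧ ContDiff ℝ (⊤ : ℕ∞) ρ ∧
  (∀ z, ∑ i, (f z i) ^ 2 = 1) ∧
  (∀ z, pairC (WZ (Fc f) z) (WZ (Fc f) z) = 0) ∧
  (∀ z, pairC (WZ (Fc f) z) (conjV (WZ (Fc f) z)) = (1 / 2 : ℂ) * (Real.exp (2 * ρ z) : ℂ)) ∧
  (∀ z i, WZb (WZ (Fc f)) z i = -(1 / 2 : ℂ) * (Real.exp (2 * ρ z) : ℂ) * Fc f z i)

/-- The Hopf field `Ω = f_{zz} − 2 ρ_z f_z`. -/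
def Hopf {m : ℕ} (f : ℂ → Fin m → ℝ) (ρ : ℂ → ℝ) : ℂ → Fin m → ℂ :=
  fun z i => WZ (WZ (Fc f)) z i - 2 * dZ ρ z * WZ (Fc f) z i

/-- Real part `Ω₁` of the Hopf field, viewed in `ℂ^{n+1}`. -/
def HopfRe {m : ℕ} (f : ℂ → Fin m → ℝ) (ρ : ℂ → ℝ) : ℂ → Fin m → ℂ :=
  fun z i => ((Hopf f ρ z i).re : ℂ)

/-- Imaginary part `Ω₂` of the Hopf field, viewed in `ℂ^{n+1}`. -/
def HopfIm {m : ℕ} (f : ℂ → Fin m → ℝ) (ρ : ℂ → ℝ) : ℂ → Fin m → ℂ :=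
  fun z i => ((Hopf f ρ z i).im : ℂ)

/-- Normal projection `E^⊥` of a constant vector `E ∈ ℝ^{n+1}`. -/
def Eperp {m : ℕ} (f : ℂ → Fin m → ℝ) (ρ : ℂ → ℝ) (E : Fin m → ℝ) : ℂ → Fin m → ℂ :=
  fun z i => (E i : ℂ) - pairC (cV E) (Fc f z) * Fc f z i
    - 2 * (Real.exp (-2 * ρ z) : ℂ) * pairC (cV E) (WZ (Fc f) z) * WZb (Fc f) z i
    - 2 * (Real.exp (-2 * ρ z) : ℂ) * pairC (cV E) (WZb (Fc f) z) * WZ (Fc f) z i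

/-- `ψ` is a normal field along `f`. -/
def IsNormalField {m : ℕ} (f : ℂ → Fin m → ℝ) (ψ : ℂ → Fin m → ℂ) : Prop :=
  ∀ z, pairC (ψ z) (Fc f z) = 0 ∧ pairC (ψ z) (WZ (Fc f) z) = 0 ∧
    pairC (ψ z) (WZb (Fc f) z) = 0

/-- Normal covariant derivative `N_z ψ = ψ_z + 2 e^{−2ρ} ⟨ψ, Ω⟩ f_z̄`. -/
def NZ {m : ℕ} (f : ℂ → Fin m → ℝ) (ρ : ℂ → ℝ) (ψ : ℂ → Fin m → ℂ) : ℂ → Fin m → ℂ :=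
  fun z i => WZ ψ z i
    + 2 * (Real.exp (-2 * ρ z) : ℂ) * pairC (ψ z) (Hopf f ρ z) * WZb (Fc f) z i

/-- Normal covariant derivative `N_z̄ ψ = ψ_z̄ + 2 e^{−2ρ} ⟨ψ, Ω̄⟩ f_z`. -/
def NZb {m : ℕ} (f : ℂ → Fin m → ℝ) (ρ : ℂ → ℝ) (ψ : ℂ → Fin m → ℂ) : ℂ → Fin m → ℂ :=
  fun z i => WZb ψ z i
    + 2 * (Real.exp (-2 * ρ z) : ℂ) * pairC (ψ z) (conjV (Hopf f ρ z)) * WZ (Fc f) z i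

/-- Normal Laplacian `Δ^⊥ ψ = 2 e^{−2ρ} (N_z̄ (N_z ψ) + N_z (N_z̄ ψ))`. -/
def LapPerp {m : ℕ} (f : ℂ → Fin m → ℝ) (ρ : ℂ → ℝ) (ψ : ℂ → Fin m → ℂ) : ℂ → Fin m → ℂ :=
  fun z i => 2 * (Real.exp (-2 * ρ z) : ℂ) * (NZb f ρ (NZ f ρ ψ) z i + NZ f ρ (NZb f ρ ψ) z i)

/-- Jacobi operator `𝓛 ψ = Δ^⊥ ψ + 2 ψ + 4 e^{−4ρ} (⟨ψ, Ω⟩ Ω̄ + ⟨ψ, Ω̄⟩ Ω)`. -/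
def Jacobi {m : ℕ} (f : ℂ → Fin m → ℝ) (ρ : ℂ → ℝ) (ψ : ℂ → Fin m → ℂ) : ℂ → Fin m → ℂ :=
  fun z i => LapPerp f ρ ψ z i + 2 * ψ z i
    + 4 * (Real.exp (-4 * ρ z) : ℂ) *
      (pairC (ψ z) (Hopf f ρ z) * conjV (Hopf f ρ z) i
        + pairC (ψ z) (conjV (Hopf f ρ z)) * Hopf f ρ z i)

/-- The S⁴ adapted frame setup: `⟨Ω, Ω⟩ ≡ 1`, `Ω₁ = cosh θ · ψ₃`, `Ω₂ = sinh θ · ψ₄`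
with `ψ₃, ψ₄` orthonormal normal fields. -/
def S4Frame (f : ℂ → Fin 5 → ℝ) (ρ : ℂ → ℝ) (ψ₃ ψ₄ : ℂ → Fin 5 → ℝ) (θ : ℂ → ℝ) : Prop :=
  ContDiff ℝ (⊤ : ℕ∞) ψ₃ ∧ ContDiff ℝ (⊤ : ℕ∞) ψ₄ ∧ ContDiff ℝ (⊤ : ℕ∞) θ ∧
  IsNormalField f (Fc ψ₃) ∧ IsNormalField f (Fc ψ₄) ∧
  (∀ z, ∑ i, (ψ₃ z i) ^ 2 = 1) ∧ (∀ z, ∑ i, (ψ₄ z i) ^ 2 = 1) ∧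
  (∀ z, ∑ i, ψ₃ z i * ψ₄ z i = 0) ∧
  (∀ z, pairC (Hopf f ρ z) (Hopf f ρ z) = 1) ∧
  (∀ z i, (Hopf f ρ z i).re = Real.cosh (θ z) * ψ₃ z i) ∧
  (∀ z i, (Hopf f ρ z i).im = Real.sinh (θ z) * ψ₄ z i)

/- ===== Wirtinger calculus toolkit ===== -/

def Sm (g : ℂ → ℂ) : Prop := ContDiff ℝ (((⊤:ℕ∞)) : WithTop ℕ∞) g

lemma Sm.dAt {g : ℂ → ℂ} (hg : Sm g) (z : ℂ) : DifferentiableAt ℝ g z :=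
  ((ContDiff.differentiable hg (by simp))).differentiableAt

lemma Sm.conj' {g : ℂ → ℂ} (hg : Sm g) : Sm (fun w => (starRingEnd ℂ) (g w)) :=
  (Complex.conjCLE.toContinuousLinearMap.contDiff).comp hg

lemma Sm.addS {g h : ℂ → ℂ} (hg : Sm g) (hh : Sm h) : Sm (fun w => g w + h w) :=
  ContDiff.add hg hh
lemma Sm.subS {g h : ℂ → ℂ} (hg : Sm g) (hh : Sm h) : Sm (fun w => g w - h w) :=
  ContDiff.sub hg hh
lemma Sm.mulS {g h : ℂ → ℂ} (hg : Sm g) (hh : Sm h) : Sm (fun w => g w * h w) :=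
  ContDiff.mul hg hh
lemma Sm.constS (a : ℂ) : Sm (fun _ => a) := contDiff_const

lemma wirtZ_const (a : ℂ) (z : ℂ) : wirtZ (fun _ => a) z = 0 := by
  simp [wirtZ]

lemma wirtZbar_const (a : ℂ) (z : ℂ) : wirtZbar (fun _ => a) z = 0 := by
  simp [wirtZbar]

lemma wirtZ_add {g h : ℂ → ℂ} {z : ℂ} (hg : DifferentiableAt ℝ g z)
    (hh : DifferentiableAt ℝ h z) :
    wirtZ (fun w => g w + h w) z = wirtZ g z + wirtZ h z := by
  simp only [wirtZ, fderiv_fun_add hg hh, ContinuousLinearMap.add_apply]; ring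

lemma wirtZbar_add {g h : ℂ → ℂ} {z : ℂ} (hg : DifferentiableAt ℝ g z)
    (hh : DifferentiableAt ℝ h z) :
    wirtZbar (fun w => g w + h w) z = wirtZbar g z + wirtZbar h z := by
  simp only [wirtZbar, fderiv_fun_add hg hh, ContinuousLinearMap.add_apply]; ring

lemma wirtZ_sub {g h : ℂ → ℂ} {z : ℂ} (hg : DifferentiableAt ℝ g z)
    (hh : DifferentiableAt ℝ h z) :
    wirtZ (fun w => g w - h w) z = wirtZ g z - wirtZ h z := by
  simp only [wirtZ, fderiv_fun_sub hg hh, ContinuousLinearMap.sub_apply]; ring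

lemma wirtZbar_sub {g h : ℂ → ℂ} {z : ℂ} (hg : DifferentiableAt ℝ g z)
    (hh : DifferentiableAt ℝ h z) :
    wirtZbar (fun w => g w - h w) z = wirtZbar g z - wirtZbar h z := by
  simp only [wirtZbar, fderiv_fun_sub hg hh, ContinuousLinearMap.sub_apply]; ring

lemma wirtZ_mul {g h : ℂ → ℂ} {z : ℂ} (hg : DifferentiableAt ℝ g z)
    (hh : DifferentiableAt ℝ h z) :
    wirtZ (fun w => g w * h w) z = wirtZ g z * h z + g z * wirtZ h z := by
  simp only [wirtZ, fderiv_fun_mul hg hh, ContinuousLinearMap.add_apply,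
    ContinuousLinearMap.smul_apply, smul_eq_mul]; ring

lemma wirtZbar_mul {g h : ℂ → ℂ} {z : ℂ} (hg : DifferentiableAt ℝ g z)
    (hh : DifferentiableAt ℝ h z) :
    wirtZbar (fun w => g w * h w) z = wirtZbar g z * h z + g z * wirtZbar h z := by
  simp only [wirtZbar, fderiv_fun_mul hg hh, ContinuousLinearMap.add_apply,
    ContinuousLinearMap.smul_apply, smul_eq_mul]; ring

lemma wirtZ_const_mul {g : ℂ → ℂ} {z : ℂ} (a : ℂ) (hg : DifferentiableAt ℝ g z) :
    wirtZ (fun w => a * g w) z = a * wirtZ g z := by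
  simp only [wirtZ, fderiv_const_mul hg a, ContinuousLinearMap.smul_apply, smul_eq_mul]; ring

lemma wirtZbar_const_mul {g : ℂ → ℂ} {z : ℂ} (a : ℂ) (hg : DifferentiableAt ℝ g z) :
    wirtZbar (fun w => a * g w) z = a * wirtZbar g z := by
  simp only [wirtZbar, fderiv_const_mul hg a, ContinuousLinearMap.smul_apply, smul_eq_mul]; ring

lemma wirtZ_sum {ι : Type*} (s : Finset ι) {A : ι → ℂ → ℂ} {z : ℂ}
    (hA : ∀ i ∈ s, DifferentiableAt ℝ (A i) z) :
    wirtZ (fun w => ∑ i ∈ s, A i w) z = ∑ i ∈ s, wirtZ (A i) z := by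
  simp only [wirtZ, fderiv_fun_sum hA, ContinuousLinearMap.sum_apply, Finset.mul_sum,
    Finset.sum_sub_distrib, Finset.mul_sum]
  rw [← Finset.sum_sub_distrib, Finset.mul_sum]

lemma wirtZ_conj {g : ℂ → ℂ} {z : ℂ} (hg : DifferentiableAt ℝ g z) :
    wirtZ (fun w => (starRingEnd ℂ) (g w)) z = (starRingEnd ℂ) (wirtZbar g z) := by
  have h : fderiv ℝ (fun w => (starRingEnd ℂ) (g w)) z
      = (Complex.conjCLE.toContinuousLinearMap).comp (fderiv ℝ g z) := by
    have := (Complex.conjCLE.toContinuousLinearMap.hasFDerivAt.comp z hg.hasFDerivAt)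
    exact this.fderiv
  simp only [wirtZ, wirtZbar, h, ContinuousLinearMap.comp_apply,
    ContinuousLinearEquiv.coe_coe, Complex.conjCLE_apply]
  rw [map_mul, map_add, map_mul]
  simp only [map_mul, map_add, map_sub, map_one, map_div₀, map_ofNat, Complex.conj_I]; ring

lemma wirtZbar_conj {g : ℂ → ℂ} {z : ℂ} (hg : DifferentiableAt ℝ g z) :
    wirtZbar (fun w => (starRingEnd ℂ) (g w)) z = (starRingEnd ℂ) (wirtZ g z) := by
  have h : fderiv ℝ (fun w => (starRingEnd ℂ) (g w)) z
      = (Complex.conjCLE.toContinuousLinearMap).comp (fderiv ℝ g z) := by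
    have := (Complex.conjCLE.toContinuousLinearMap.hasFDerivAt.comp z hg.hasFDerivAt)
    exact this.fderiv
  simp only [wirtZ, wirtZbar, h, ContinuousLinearMap.comp_apply,
    ContinuousLinearEquiv.coe_coe, Complex.conjCLE_apply]
  rw [map_mul, map_sub, map_mul]
  simp only [map_mul, map_add, map_sub, map_one, map_div₀, map_ofNat, Complex.conj_I]; ring

lemma wirtZ_cexp {g : ℂ → ℂ} {z : ℂ} (hg : DifferentiableAt ℝ g z) :
    wirtZ (fun w => Complex.exp (g w)) z = Complex.exp (g z) * wirtZ g z := by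
  have h : HasFDerivAt (fun w => Complex.exp (g w))
      (Complex.exp (g z) • fderiv ℝ g z) z := by
    have h1 := (Complex.hasDerivAt_exp (g z)).hasFDerivAt.restrictScalars ℝ
    have := h1.comp z hg.hasFDerivAt
    refine this.congr_fderiv ?_
    ext t
    simp [ContinuousLinearMap.smul_apply, mul_comm]
  simp only [wirtZ, h.fderiv, ContinuousLinearMap.smul_apply, smul_eq_mul]; ring

lemma Sm.wirtZ' {g : ℂ → ℂ} (hg : Sm g) : Sm (wirtZ g) := by
  have hd : ContDiff ℝ (((⊤:ℕ∞)) : WithTop ℕ∞) (fderiv ℝ g) :=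
    ContDiff.fderiv_right hg (by exact_mod_cast le_top)
  have h1 : Sm (fun z => fderiv ℝ g z 1) := hd.clm_apply contDiff_const
  have hI : Sm (fun z => fderiv ℝ g z Complex.I) := hd.clm_apply contDiff_const
  exact contDiff_const.mul (h1.sub (contDiff_const.mul hI))

lemma Sm.wirtZbar' {g : ℂ → ℂ} (hg : Sm g) : Sm (wirtZbar g) := by
  have hd : ContDiff ℝ (((⊤:ℕ∞)) : WithTop ℕ∞) (fderiv ℝ g) :=
    ContDiff.fderiv_right hg (by exact_mod_cast le_top)
  have h1 : Sm (fun z => fderiv ℝ g z 1) := hd.clm_apply contDiff_const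
  have hI : Sm (fun z => fderiv ℝ g z Complex.I) := hd.clm_apply contDiff_const
  exact contDiff_const.mul (h1.add (contDiff_const.mul hI))

lemma fderiv_fderiv_apply {g : ℂ → ℂ} (hg : Sm g) (z t s : ℂ) :
    fderiv ℝ (fun w => fderiv ℝ g w t) z s = fderiv ℝ (fderiv ℝ g) z s t := by
  have hd : ContDiff ℝ (((⊤:ℕ∞)) : WithTop ℕ∞) (fderiv ℝ g) :=
    ContDiff.fderiv_right hg (by exact_mod_cast le_top)
  have hdd : DifferentiableAt ℝ (fderiv ℝ g) z :=
    (ContDiff.differentiable hd (by simp)).differentiableAt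
  rw [fderiv_clm_apply hdd (differentiableAt_const t)]
  simp

lemma wirt_comm {g : ℂ → ℂ} (hg : Sm g) (z : ℂ) :
    wirtZ (wirtZbar g) z = wirtZbar (wirtZ g) z := by
  have hd : ContDiff ℝ (((⊤:ℕ∞)) : WithTop ℕ∞) (fderiv ℝ g) :=
    ContDiff.fderiv_right hg (by exact_mod_cast le_top)
  have hdiff : Differentiable ℝ g := ContDiff.differentiable hg (by simp)
  have hdd : DifferentiableAt ℝ (fderiv ℝ g) z :=
    (ContDiff.differentiable hd (by simp)).differentiableAt
  have hsymm := second_derivative_symmetric (f := g) (f' := fderiv ℝ g)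
    (f'' := fderiv ℝ (fderiv ℝ g) z) (x := z)
    (fun y => (hdiff y).hasFDerivAt) hdd.hasFDerivAt
  have h1 : Sm (fun w => fderiv ℝ g w 1) := hd.clm_apply contDiff_const
  have hI : Sm (fun w => fderiv ℝ g w Complex.I) := hd.clm_apply contDiff_const
  have e1 : ∀ t s : ℂ, fderiv ℝ (fun w => fderiv ℝ g w t) z s
      = fderiv ℝ (fderiv ℝ g) z s t := fun t s => fderiv_fderiv_apply hg z t s
  have key : ∀ t : ℂ,
      fderiv ℝ (wirtZbar g) z t
        = (1/2 : ℂ) * (fderiv ℝ (fderiv ℝ g) z t 1 + Complex.I * fderiv ℝ (fderiv ℝ g) z t Complex.I)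
      ∧ fderiv ℝ (wirtZ g) z t
        = (1/2 : ℂ) * (fderiv ℝ (fderiv ℝ g) z t 1 - Complex.I * fderiv ℝ (fderiv ℝ g) z t Complex.I) := by
    intro t
    have d1 : DifferentiableAt ℝ (fun w => fderiv ℝ g w 1) z := (h1.dAt z)
    have dI : DifferentiableAt ℝ (fun w => fderiv ℝ g w Complex.I) z := (hI.dAt z)
    constructor
    · have : wirtZbar g = fun w => (1/2 : ℂ) * (fderiv ℝ g w 1 + Complex.I * fderiv ℝ g w Complex.I) := rfl
      rw [this, fderiv_const_mul (d1.fun_add (dI.const_mul _)) ((1:ℂ)/2),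
        fderiv_fun_add d1 (dI.const_mul _), fderiv_const_mul dI Complex.I]
      simp only [ContinuousLinearMap.smul_apply, ContinuousLinearMap.add_apply, smul_eq_mul, e1]
    · have : wirtZ g = fun w => (1/2 : ℂ) * (fderiv ℝ g w 1 - Complex.I * fderiv ℝ g w Complex.I) := rfl
      rw [this, fderiv_const_mul (d1.fun_sub (dI.const_mul _)) ((1:ℂ)/2),
        fderiv_fun_sub d1 (dI.const_mul _), fderiv_const_mul dI Complex.I]
      simp only [ContinuousLinearMap.smul_apply, ContinuousLinearMap.sub_apply, smul_eq_mul, e1]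
  simp only [wirtZ, wirtZbar, (key 1).1, (key 1).2, (key Complex.I).1, (key Complex.I).2]
  rw [hsymm 1 Complex.I]
  ring
/- ===== pairC algebra ===== -/

lemma pairC_comm {m : ℕ} (a b : Fin m → ℂ) : pairC a b = pairC b a := by
  simp only [pairC]; exact Finset.sum_congr rfl fun i _ => mul_comm _ _

lemma pairC_conj {m : ℕ} (a b : Fin m → ℂ) :
    pairC (conjV a) (conjV b) = (starRingEnd ℂ) (pairC a b) := by
  simp only [pairC, conjV, map_sum, map_mul]

lemma pairC_lin3 {m : ℕ} (A B C : ℂ) (F U V X : Fin m → ℂ) :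
    pairC (fun i => A * F i + B * U i + C * V i) X
      = A * pairC F X + B * pairC U X + C * pairC V X := by
  simp only [pairC, Finset.mul_sum, ← Finset.sum_add_distrib]
  exact Finset.sum_congr rfl fun i _ => by ring

lemma pairC_lin2 {m : ℕ} (A B : ℂ) (F U X : Fin m → ℂ) :
    pairC (fun i => A * F i - B * U i) X = A * pairC F X - B * pairC U X := by
  simp only [pairC, Finset.mul_sum, ← Finset.sum_sub_distrib]
  exact Finset.sum_congr rfl fun i _ => by ring

lemma pairC_expand4 {m : ℕ} (A B C : ℂ) (E0 F V U X : Fin m → ℂ) :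
    pairC (fun i => E0 i - A * F i - B * V i - C * U i) X
      = pairC E0 X - A * pairC F X - B * pairC V X - C * pairC U X := by
  simp only [pairC, Finset.mul_sum, ← Finset.sum_sub_distrib]
  exact Finset.sum_congr rfl fun i _ => by ring

lemma wirtZ_pairC {m : ℕ} {a b : ℂ → Fin m → ℂ} {z : ℂ}
    (ha : ∀ i, Sm (fun w => a w i)) (hb : ∀ i, Sm (fun w => b w i)) :
    wirtZ (fun w => pairC (a w) (b w)) z
      = pairC (WZ a z) (b z) + pairC (a z) (WZ b z) := by
  have h0 : (fun w => pairC (a w) (b w))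
      = fun w => ∑ i, (fun w' => a w' i * b w' i) w := rfl
  rw [h0, wirtZ_sum _ (fun i _ => ((ha i).dAt z).fun_mul ((hb i).dAt z))]
  have h1 : ∀ i, wirtZ (fun w' => a w' i * b w' i) z
      = wirtZ (fun w => a w i) z * b z i + a z i * wirtZ (fun w => b w i) z :=
    fun i => wirtZ_mul ((ha i).dAt z) ((hb i).dAt z)
  simp only [h1, pairC, WZ, Finset.sum_add_distrib]

lemma Sm.pairC' {m : ℕ} {a b : ℂ → Fin m → ℂ}
    (ha : ∀ i, Sm (fun w => a w i)) (hb : ∀ i, Sm (fun w => b w i)) :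
    Sm (fun w => pairC (a w) (b w)) := by
  have : (fun w => pairC (a w) (b w)) = fun w => ∑ i, a w i * b w i := rfl
  rw [this]
  exact ContDiff.sum fun i _ => (ha i).mul (hb i)

/- ===== smoothness of geometric objects ===== -/

section Geometry
variable {m : ℕ} {f : ℂ → Fin m → ℝ} {ρ : ℂ → ℝ}

lemma smF (hf : IsConfMinImm f ρ) (i : Fin m) : Sm (fun w => Fc f w i) :=
  Complex.ofRealCLM.contDiff.comp ((contDiff_pi.mp (hf.1.of_le (by simp))) i)

lemma smU (hf : IsConfMinImm f ρ) (i : Fin m) : Sm (fun w => WZ (Fc f) w i) :=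
  (smF hf i).wirtZ'

lemma smV (hf : IsConfMinImm f ρ) (i : Fin m) : Sm (fun w => WZb (Fc f) w i) :=
  (smF hf i).wirtZbar'

lemma smUU (hf : IsConfMinImm f ρ) (i : Fin m) : Sm (fun w => WZ (WZ (Fc f)) w i) :=
  (smU hf i).wirtZ'

lemma smRhoC (hf : IsConfMinImm f ρ) : Sm (fun w => ((ρ w : ℝ) : ℂ)) :=
  Complex.ofRealCLM.contDiff.comp (hf.2.1.of_le (by simp))

lemma smDZ (hf : IsConfMinImm f ρ) : Sm (dZ ρ) :=
  (smRhoC hf).wirtZ'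

lemma smExpR (hf : IsConfMinImm f ρ) (a : ℝ) :
    Sm (fun w => ((Real.exp (a * ρ w) : ℝ) : ℂ)) := by
  have h1 : (fun w => ((Real.exp (a * ρ w) : ℝ) : ℂ))
      = fun w => Complex.exp ((a : ℂ) * ((ρ w : ℝ) : ℂ)) := by
    funext w; rw [Complex.ofReal_exp]; norm_cast
  rw [h1]
  exact (Complex.contDiff_exp (𝕜 := ℝ)).comp (contDiff_const.mul (smRhoC hf))

lemma smHopf (hf : IsConfMinImm f ρ) (i : Fin m) : Sm (fun w => Hopf f ρ w i) := by
  have : (fun w => Hopf f ρ w i)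
      = fun w => WZ (WZ (Fc f)) w i - (2 : ℂ) * dZ ρ w * WZ (Fc f) w i := rfl
  rw [this]
  exact (smUU hf i).subS (((Sm.constS 2).mulS (smDZ hf)).mulS (smU hf i))

lemma wirtZ_expReal (hf : IsConfMinImm f ρ) (a : ℝ) (z : ℂ) :
    wirtZ (fun w => ((Real.exp (a * ρ w) : ℝ) : ℂ)) z
      = (a : ℂ) * dZ ρ z * ((Real.exp (a * ρ z) : ℝ) : ℂ) := by
  have h1 : (fun w => ((Real.exp (a * ρ w) : ℝ) : ℂ))
      = fun w => Complex.exp ((a : ℂ) * ((ρ w : ℝ) : ℂ)) := by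
    funext w; rw [Complex.ofReal_exp]; norm_cast
  rw [h1, wirtZ_cexp (((smRhoC hf).dAt z).const_mul _),
    wirtZ_const_mul _ ((smRhoC hf).dAt z),
    show ((Real.exp (a * ρ z) : ℝ) : ℂ) = Complex.exp ((a : ℂ) * ((ρ z : ℝ) : ℂ)) from by
      rw [Complex.ofReal_exp]; norm_cast]
  have h2 : wirtZ (fun w => ((ρ w : ℝ) : ℂ)) z = dZ ρ z := rfl
  rw [h2]; ring

/- ===== basic pointwise identities ===== -/

lemma conjF_eq (hf : IsConfMinImm f ρ) (z : ℂ) : conjV (Fc f z) = Fc f z := by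
  funext i; simp [conjV, Fc, cV, Complex.conj_ofReal]

lemma conjU_eq_V (hf : IsConfMinImm f ρ) (z : ℂ) :
    conjV (WZ (Fc f) z) = WZb (Fc f) z := by
  funext i
  have hg : (fun w => (starRingEnd ℂ) (Fc f w i)) = fun w => Fc f w i := by
    funext w; simp [Fc, cV, Complex.conj_ofReal]
  have := wirtZbar_conj (g := fun w => Fc f w i) ((smF hf i).dAt z)
  rw [hg] at this
  simp only [conjV, WZ, WZb]
  rw [← this]

lemma conjV_eq_U (hf : IsConfMinImm f ρ) (z : ℂ) :
    conjV (WZb (Fc f) z) = WZ (Fc f) z := by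
  rw [← conjU_eq_V hf z]
  funext i; simp [conjV]

-- P1
lemma pair_FF (hf : IsConfMinImm f ρ) (z : ℂ) : pairC (Fc f z) (Fc f z) = 1 := by
  have h := hf.2.2.1 z
  simp only [pairC, Fc, cV]
  rw [show ∑ i, ((f z i : ℂ) * (f z i : ℂ)) = ((∑ i, f z i ^ 2 : ℝ) : ℂ) by
    push_cast; exact Finset.sum_congr rfl fun i _ => by ring]
  rw [h]; norm_num

-- P4, P5, P6, P7
lemma pair_UU (hf : IsConfMinImm f ρ) (z : ℂ) : pairC (WZ (Fc f) z) (WZ (Fc f) z) = 0 :=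
  hf.2.2.2.1 z

lemma pair_UV (hf : IsConfMinImm f ρ) (z : ℂ) :
    pairC (WZ (Fc f) z) (WZb (Fc f) z) = (1/2 : ℂ) * ((Real.exp (2 * ρ z) : ℝ) : ℂ) := by
  have := hf.2.2.2.2.1 z
  rw [conjU_eq_V hf z] at this
  simpa using this

lemma pair_VV (hf : IsConfMinImm f ρ) (z : ℂ) : pairC (WZb (Fc f) z) (WZb (Fc f) z) = 0 := by
  have := pair_UU hf z
  rw [← conjU_eq_V hf z, pairC_conj, this, map_zero]

-- P2, P3
lemma pair_FU (hf : IsConfMinImm f ρ) (z : ℂ) : pairC (Fc f z) (WZ (Fc f) z) = 0 := by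
  have h0 : (fun w => pairC (Fc f w) (Fc f w)) = fun _ => (1 : ℂ) := by
    funext w; exact pair_FF hf w
  have h1 := wirtZ_pairC (a := Fc f) (b := Fc f) (z := z) (smF hf) (smF hf)
  rw [h0, wirtZ_const] at h1
  have h2 : pairC (WZ (Fc f) z) (Fc f z) = pairC (Fc f z) (WZ (Fc f) z) := pairC_comm _ _
  rw [h2] at h1
  have : (2 : ℂ) * pairC (Fc f z) (WZ (Fc f) z) = 0 := by linear_combination -h1
  exact (mul_eq_zero.mp this).resolve_left two_ne_zero

lemma pair_FV (hf : IsConfMinImm f ρ) (z : ℂ) : pairC (Fc f z) (WZb (Fc f) z) = 0 := by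
  have := pair_FU hf z
  calc pairC (Fc f z) (WZb (Fc f) z)
      = pairC (conjV (Fc f z)) (conjV (WZ (Fc f) z)) := by
        rw [conjF_eq hf z, conjU_eq_V hf z]
    _ = (starRingEnd ℂ) (pairC (Fc f z) (WZ (Fc f) z)) := pairC_conj _ _
    _ = 0 := by rw [this, map_zero]

-- P8 : ∂_z of f_z̄  =  −(1/2) e^{2ρ} f
lemma wz_V (hf : IsConfMinImm f ρ) (z : ℂ) (i : Fin m) :
    WZ (WZb (Fc f)) z i = -(1/2 : ℂ) * ((Real.exp (2 * ρ z) : ℝ) : ℂ) * Fc f z i := by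
  have h1 : WZ (WZb (Fc f)) z i = wirtZ (wirtZbar (fun w => Fc f w i)) z := rfl
  rw [h1, wirt_comm (smF hf i) z]
  exact hf.2.2.2.2.2 z i

-- P9
lemma fzz_eq (hf : IsConfMinImm f ρ) (z : ℂ) (i : Fin m) :
    WZ (WZ (Fc f)) z i = Hopf f ρ z i + 2 * dZ ρ z * WZ (Fc f) z i := by
  simp only [Hopf]; ring
end Geometry
/- ===== more pairC helpers ===== -/

lemma pairC_smul_right {m : ℕ} (A : ℂ) (X Y : Fin m → ℂ) :
    pairC X (fun i => A * Y i) = A * pairC X Y := by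
  simp only [pairC, Finset.mul_sum]
  exact Finset.sum_congr rfl fun i _ => by ring

lemma pairC_add_smul_right {m : ℕ} (A : ℂ) (X Y Z' : Fin m → ℂ) :
    pairC X (fun i => Y i + A * Z' i) = pairC X Y + A * pairC X Z' := by
  simp only [pairC, Finset.mul_sum, ← Finset.sum_add_distrib]
  exact Finset.sum_congr rfl fun i _ => by ring

section Geometry2
variable {m : ℕ} {f : ℂ → Fin m → ℝ} {ρ : ℂ → ℝ}

lemma pair_Hopf_decomp (hf : IsConfMinImm f ρ) (z : ℂ) (X : Fin m → ℂ) :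
    pairC (Hopf f ρ z) X
      = pairC (WZ (WZ (Fc f)) z) X - 2 * dZ ρ z * pairC (WZ (Fc f) z) X := by
  have h : Hopf f ρ z = fun i => (1 : ℂ) * WZ (WZ (Fc f)) z i
      - (2 * dZ ρ z) * WZ (Fc f) z i := by
    funext i; simp only [Hopf]; ring
  rw [h, pairC_lin2]; ring

lemma pair_fzz_F (hf : IsConfMinImm f ρ) (z : ℂ) :
    pairC (Fc f z) (WZ (WZ (Fc f)) z) = 0 := by
  have h0 : (fun w => pairC (Fc f w) (WZ (Fc f) w)) = fun _ => (0 : ℂ) := by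
    funext w; exact pair_FU hf w
  have h1 := wirtZ_pairC (a := Fc f) (b := WZ (Fc f)) (z := z) (smF hf) (smU hf)
  rw [h0, wirtZ_const] at h1
  have h2 := pair_UU hf z
  linear_combination -h1 - h2

lemma pair_fzz_U (hf : IsConfMinImm f ρ) (z : ℂ) :
    pairC (WZ (Fc f) z) (WZ (WZ (Fc f)) z) = 0 := by
  have h0 : (fun w => pairC (WZ (Fc f) w) (WZ (Fc f) w)) = fun _ => (0 : ℂ) := by
    funext w; exact pair_UU hf w
  have h1 := wirtZ_pairC (a := WZ (Fc f)) (b := WZ (Fc f)) (z := z) (smU hf) (smU hf)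
  rw [h0, wirtZ_const] at h1
  rw [pairC_comm (WZ (WZ (Fc f)) z) (WZ (Fc f) z)] at h1
  have : (2 : ℂ) * pairC (WZ (Fc f) z) (WZ (WZ (Fc f)) z) = 0 := by linear_combination -h1
  exact (mul_eq_zero.mp this).resolve_left two_ne_zero

lemma pair_fzz_V (hf : IsConfMinImm f ρ) (z : ℂ) :
    pairC (WZb (Fc f) z) (WZ (WZ (Fc f)) z)
      = dZ ρ z * ((Real.exp (2 * ρ z) : ℝ) : ℂ) := by
  have h0 : (fun w => pairC (WZ (Fc f) w) (WZb (Fc f) w))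
      = fun w => (1/2 : ℂ) * ((Real.exp (2 * ρ w) : ℝ) : ℂ) := by
    funext w; exact pair_UV hf w
  have h1 := wirtZ_pairC (a := WZ (Fc f)) (b := WZb (Fc f)) (z := z) (smU hf) (smV hf)
  rw [h0, wirtZ_const_mul _ ((smExpR hf 2).dAt z), wirtZ_expReal hf 2 z] at h1
  have h2 : pairC (WZ (Fc f) z) (WZ (WZb (Fc f)) z) = 0 := by
    have hv : WZ (WZb (Fc f)) z
        = fun i => (-(1/2 : ℂ) * ((Real.exp (2 * ρ z) : ℝ) : ℂ)) * Fc f z i := by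
      funext i; rw [wz_V hf z i]
    rw [hv, pairC_smul_right, pairC_comm, pair_FU hf z]; ring
  rw [h2] at h1
  rw [pairC_comm (WZ (WZ (Fc f)) z) (WZb (Fc f) z)] at h1
  push_cast at h1 ⊢
  linear_combination -h1

-- Ω is a normal field
lemma pair_Hopf_F (hf : IsConfMinImm f ρ) (z : ℂ) :
    pairC (Hopf f ρ z) (Fc f z) = 0 := by
  rw [pair_Hopf_decomp hf z, pairC_comm (WZ (WZ (Fc f)) z) (Fc f z), pair_fzz_F hf z,
    pairC_comm (WZ (Fc f) z) (Fc f z), pair_FU hf z]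
  ring

lemma pair_Hopf_U (hf : IsConfMinImm f ρ) (z : ℂ) :
    pairC (Hopf f ρ z) (WZ (Fc f) z) = 0 := by
  rw [pair_Hopf_decomp hf z, pairC_comm (WZ (WZ (Fc f)) z) (WZ (Fc f) z), pair_fzz_U hf z,
    pair_UU hf z]
  ring

lemma pair_Hopf_V (hf : IsConfMinImm f ρ) (z : ℂ) :
    pairC (Hopf f ρ z) (WZb (Fc f) z) = 0 := by
  rw [pair_Hopf_decomp hf z, pairC_comm (WZ (WZ (Fc f)) z) (WZb (Fc f) z), pair_fzz_V hf z,
    pair_UV hf z]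
  ring

-- Codazzi equation
lemma codazzi (hf : IsConfMinImm f ρ) (z : ℂ) (i : Fin m) :
    WZb (Hopf f ρ) z i
      = -((1/2 : ℂ) * ((Real.exp (2 * ρ z) : ℝ) : ℂ) + 2 * wirtZbar (dZ ρ) z)
          * WZ (Fc f) z i := by
  have hHfun : (fun w => Hopf f ρ w i)
      = fun w => (fun w' => WZ (WZ (Fc f)) w' i) w
          - (fun w' => 2 * dZ ρ w' * WZ (Fc f) w' i) w := rfl
  have hsm2 : Sm (fun w' => 2 * dZ ρ w') := (Sm.constS 2).mulS (smDZ hf)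
  have step1 : WZb (Hopf f ρ) z i
      = wirtZbar (fun w => WZ (WZ (Fc f)) w i) z
        - wirtZbar (fun w => 2 * dZ ρ w * WZ (Fc f) w i) z := by
    show wirtZbar (fun w => Hopf f ρ w i) z = _
    rw [hHfun, wirtZbar_sub ((smUU hf i).dAt z) ((hsm2.mulS (smU hf i)).dAt z)]
  have step2 : wirtZbar (fun w => 2 * dZ ρ w * WZ (Fc f) w i) z
      = 2 * wirtZbar (dZ ρ) z * WZ (Fc f) z i
        + 2 * dZ ρ z * (-(1/2 : ℂ) * ((Real.exp (2 * ρ z) : ℝ) : ℂ) * Fc f z i) := by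
    have := wirtZbar_mul (g := fun w' => 2 * dZ ρ w') (h := fun w => WZ (Fc f) w i)
      (hsm2.dAt z) ((smU hf i).dAt z)
    rw [wirtZbar_const_mul _ ((smDZ hf).dAt z)] at this
    have hwv : wirtZbar (fun w => WZ (Fc f) w i) z = WZb (WZ (Fc f)) z i := rfl
    rw [hwv, hf.2.2.2.2.2 z i] at this
    exact this
  have step3 : wirtZbar (fun w => WZ (WZ (Fc f)) w i) z
      = -(dZ ρ z) * ((Real.exp (2 * ρ z) : ℝ) : ℂ) * Fc f z i
        - (1/2 : ℂ) * ((Real.exp (2 * ρ z) : ℝ) : ℂ) * WZ (Fc f) z i := by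
    have hcomm : wirtZbar (fun w => WZ (WZ (Fc f)) w i) z
        = wirtZ (wirtZbar (fun w => WZ (Fc f) w i)) z := by
      rw [wirt_comm (smU hf i) z]; rfl
    have hfun : wirtZbar (fun w => WZ (Fc f) w i)
        = fun w => (fun w' => -(1/2 : ℂ) * ((Real.exp (2 * ρ w') : ℝ) : ℂ)) w
            * (fun w' => Fc f w' i) w := by
      funext w
      exact hf.2.2.2.2.2 w i
    rw [hcomm, hfun, wirtZ_mul (((Sm.constS (-(1/2))).mulS (smExpR hf 2)).dAt z)
      ((smF hf i).dAt z), wirtZ_const_mul _ ((smExpR hf 2).dAt z), wirtZ_expReal hf 2 z]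
    have hwu : wirtZ (fun w' => Fc f w' i) z = WZ (Fc f) z i := rfl
    rw [hwu]
    push_cast
    ring
  rw [step1, step2, step3]
  ring

-- conjugate Codazzi
lemma codazzi_conj (hf : IsConfMinImm f ρ) (z : ℂ) (i : Fin m) :
    wirtZ (fun w => (starRingEnd ℂ) (Hopf f ρ w i)) z
      = -((1/2 : ℂ) * ((Real.exp (2 * ρ z) : ℝ) : ℂ)
          + 2 * (starRingEnd ℂ) (wirtZbar (dZ ρ) z)) * WZb (Fc f) z i := by
  rw [wirtZ_conj ((smHopf hf i).dAt z)]
  have h1 : WZb (Hopf f ρ) z i = wirtZbar (fun w => Hopf f ρ w i) z := rfl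
  rw [← h1, codazzi hf z i]
  have hcu : (starRingEnd ℂ) (WZ (Fc f) z i) = WZb (Fc f) z i := by
    have := congrFun (conjU_eq_V hf z) i
    simpa [conjV] using this
  simp only [map_mul, map_neg, map_add, map_ofNat, map_one, map_div₀,
    Complex.conj_ofReal, hcu]

-- derivative pairings of Ω
lemma pair_OZ_F (hf : IsConfMinImm f ρ) (z : ℂ) :
    pairC (WZ (Hopf f ρ) z) (Fc f z) = 0 := by
  have h0 : (fun w => pairC (Hopf f ρ w) (Fc f w)) = fun _ => (0 : ℂ) := by
    funext w; exact pair_Hopf_F hf w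
  have h1 := wirtZ_pairC (a := Hopf f ρ) (b := Fc f) (z := z) (smHopf hf) (smF hf)
  rw [h0, wirtZ_const] at h1
  rw [pair_Hopf_U hf z] at h1
  linear_combination -h1

lemma pair_OZ_U (hf : IsConfMinImm f ρ)
    (hiso : ∀ w, pairC (Hopf f ρ w) (Hopf f ρ w) = 0) (z : ℂ) :
    pairC (WZ (Hopf f ρ) z) (WZ (Fc f) z) = 0 := by
  have h0 : (fun w => pairC (Hopf f ρ w) (WZ (Fc f) w)) = fun _ => (0 : ℂ) := by
    funext w; exact pair_Hopf_U hf w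
  have h1 := wirtZ_pairC (a := Hopf f ρ) (b := WZ (Fc f)) (z := z) (smHopf hf) (smU hf)
  rw [h0, wirtZ_const] at h1
  have h2 : pairC (Hopf f ρ z) (WZ (WZ (Fc f)) z) = 0 := by
    have hv : WZ (WZ (Fc f)) z
        = fun i => Hopf f ρ z i + (2 * dZ ρ z) * WZ (Fc f) z i := by
      funext i; rw [fzz_eq hf z i]
    rw [hv, pairC_add_smul_right, hiso z, pair_Hopf_U hf z]; ring
  rw [h2] at h1
  linear_combination -h1

lemma pair_OZ_V (hf : IsConfMinImm f ρ) (z : ℂ) :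
    pairC (WZ (Hopf f ρ) z) (WZb (Fc f) z) = 0 := by
  have h0 : (fun w => pairC (Hopf f ρ w) (WZb (Fc f) w)) = fun _ => (0 : ℂ) := by
    funext w; exact pair_Hopf_V hf w
  have h1 := wirtZ_pairC (a := Hopf f ρ) (b := WZb (Fc f)) (z := z) (smHopf hf) (smV hf)
  rw [h0, wirtZ_const] at h1
  have h2 : pairC (Hopf f ρ z) (WZ (WZb (Fc f)) z) = 0 := by
    have hv : WZ (WZb (Fc f)) z
        = fun i => (-(1/2 : ℂ) * ((Real.exp (2 * ρ z) : ℝ) : ℂ)) * Fc f z i := by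
      funext i; rw [wz_V hf z i]
    rw [hv, pairC_smul_right, pair_Hopf_F hf z]; ring
  rw [h2] at h1
  linear_combination -h1

end Geometry2
/-- first step of Proposition 3.4 (equation (3.8)). -/
theorem superminimal_first_step (n : ℕ) (hn : 3 ≤ n)
    (f : ℂ → Fin (n + 1) → ℝ) (ρ : ℂ → ℝ) (hf : IsConfMinImm f ρ)
    (hiso : ∀ z : ℂ, pairC (Hopf f ρ z) (Hopf f ρ z) = 0)
    (c : ℂ) (E : Fin (n + 1) → ℝ)
    (hdep : ∀ (z : ℂ) (i : Fin (n + 1)),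
      c * Hopf f ρ z i + (starRingEnd ℂ) c * (starRingEnd ℂ) (Hopf f ρ z i)
        + Eperp f ρ E z i = 0) :
    ∀ z : ℂ,
      (∀ i : Fin (n + 1), c * NZ f ρ (Hopf f ρ) z i
        - 2 * (Real.exp (-2 * ρ z) : ℂ) * pairC (cV E) (WZb (Fc f) z) * Hopf f ρ z i = 0) ∧
      (starRingEnd ℂ) c * pairC (conjV (Hopf f ρ z)) (Hopf f ρ z)
        + pairC (cV E) (Hopf f ρ z) = 0 := by
  intro z
  set α : ℂ → ℂ := fun w => pairC (cV E) (Fc f w) with hα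
  set β : ℂ → ℂ := fun w => 2 * ((Real.exp (-2 * ρ w) : ℝ) : ℂ) * pairC (cV E) (WZ (Fc f) w)
    with hβ
  set γ : ℂ → ℂ := fun w => 2 * ((Real.exp (-2 * ρ w) : ℝ) : ℂ) * pairC (cV E) (WZb (Fc f) w)
    with hγ
  have smα : Sm α := Sm.pairC' (fun i => Sm.constS _) (smF hf)
  have smβ : Sm β :=
    ((Sm.constS 2).mulS (smExpR hf (-2))).mulS (Sm.pairC' (fun i => Sm.constS _) (smU hf))
  have smγ : Sm γ :=
    ((Sm.constS 2).mulS (smExpR hf (-2))).mulS (Sm.pairC' (fun i => Sm.constS _) (smV hf))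
  have hEdef : ∀ (w : ℂ) (i : Fin (n + 1)), Eperp f ρ E w i
      = (E i : ℂ) - α w * Fc f w i - β w * WZb (Fc f) w i - γ w * WZ (Fc f) w i :=
    fun w i => rfl
  -- notation
  have hE2ne : ((Real.exp (2 * ρ z) : ℝ) : ℂ) ≠ 0 :=
    Complex.ofReal_ne_zero.mpr (Real.exp_ne_zero _)
  -- the differentiated dependence relation
  have hkey0 : ∀ i : Fin (n + 1),
      c * WZ (Hopf f ρ) z i
        + (starRingEnd ℂ) c * (-((1/2 : ℂ) * ((Real.exp (2 * ρ z) : ℝ) : ℂ)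
            + 2 * (starRingEnd ℂ) (wirtZbar (dZ ρ) z)) * WZb (Fc f) z i)
        + (0 - (wirtZ α z * Fc f z i + α z * WZ (Fc f) z i)
            - (wirtZ β z * WZb (Fc f) z i
                + β z * (-(1/2 : ℂ) * ((Real.exp (2 * ρ z) : ℝ) : ℂ) * Fc f z i))
            - (wirtZ γ z * WZ (Fc f) z i
                + γ z * (Hopf f ρ z i + 2 * dZ ρ z * WZ (Fc f) z i))) = 0 := by
    intro i
    have smEp : Sm (fun w => Eperp f ρ E w i) := by
      have : (fun w => Eperp f ρ E w i) = fun w =>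
          (fun _ => (E i : ℂ)) w - (fun w' => α w' * Fc f w' i) w
            - (fun w' => β w' * WZb (Fc f) w' i) w - (fun w' => γ w' * WZ (Fc f) w' i) w :=
        funext fun w => hEdef w i
      rw [this]
      exact (((Sm.constS _).subS (smα.mulS (smF hf i))).subS
        (smβ.mulS (smV hf i))).subS (smγ.mulS (smU hf i))
    have h0 : (fun w => c * Hopf f ρ w i
        + (starRingEnd ℂ) c * (starRingEnd ℂ) (Hopf f ρ w i) + Eperp f ρ E w i)
        = fun _ => (0 : ℂ) := funext fun w => hdep w i
    have hwz : wirtZ (fun w => c * Hopf f ρ w i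
        + (starRingEnd ℂ) c * (starRingEnd ℂ) (Hopf f ρ w i) + Eperp f ρ E w i) z = 0 := by
      rw [h0]; exact wirtZ_const 0 z
    have d1 : DifferentiableAt ℝ (fun w => c * Hopf f ρ w i) z :=
      (((Sm.constS c).mulS (smHopf hf i)).dAt z)
    have d2 : DifferentiableAt ℝ
        (fun w => (starRingEnd ℂ) c * (starRingEnd ℂ) (Hopf f ρ w i)) z :=
      (((Sm.constS _).mulS ((smHopf hf i).conj')).dAt z)
    rw [show (fun w => c * Hopf f ρ w i
          + (starRingEnd ℂ) c * (starRingEnd ℂ) (Hopf f ρ w i) + Eperp f ρ E w i)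
        = fun w => ((fun w' => c * Hopf f ρ w' i) w
          + (fun w' => (starRingEnd ℂ) c * (starRingEnd ℂ) (Hopf f ρ w' i)) w)
          + (fun w' => Eperp f ρ E w' i) w from rfl,
      wirtZ_add (d1.fun_add d2) (smEp.dAt z), wirtZ_add d1 d2,
      wirtZ_const_mul c ((smHopf hf i).dAt z),
      wirtZ_const_mul _ (((smHopf hf i).conj').dAt z)] at hwz
    -- derivative of the Eperp component
    have hEw : wirtZ (fun w => Eperp f ρ E w i) z
        = 0 - (wirtZ α z * Fc f z i + α z * WZ (Fc f) z i)
          - (wirtZ β z * WZb (Fc f) z i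
              + β z * (-(1/2 : ℂ) * ((Real.exp (2 * ρ z) : ℝ) : ℂ) * Fc f z i))
          - (wirtZ γ z * WZ (Fc f) z i
              + γ z * (Hopf f ρ z i + 2 * dZ ρ z * WZ (Fc f) z i)) := by
      rw [show (fun w => Eperp f ρ E w i) = fun w =>
          (((fun _ => (E i : ℂ)) w - (fun w' => α w' * Fc f w' i) w)
            - (fun w' => β w' * WZb (Fc f) w' i) w) - (fun w' => γ w' * WZ (Fc f) w' i) w
        from funext fun w => hEdef w i]
      rw [wirtZ_sub ((((Sm.constS _).subS (smα.mulS (smF hf i))).subS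
            (smβ.mulS (smV hf i))).dAt z) ((smγ.mulS (smU hf i)).dAt z),
        wirtZ_sub (((Sm.constS _).subS (smα.mulS (smF hf i))).dAt z)
          ((smβ.mulS (smV hf i)).dAt z),
        wirtZ_sub ((Sm.constS (E i : ℂ)).dAt z) ((smα.mulS (smF hf i)).dAt z),
        wirtZ_const,
        wirtZ_mul (smα.dAt z) ((smF hf i).dAt z),
        wirtZ_mul (smβ.dAt z) ((smV hf i).dAt z),
        wirtZ_mul (smγ.dAt z) ((smU hf i).dAt z)]
      have e1 : wirtZ (fun w => WZb (Fc f) w i) z = WZ (WZb (Fc f)) z i := rfl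
      have e2 : wirtZ (fun w => WZ (Fc f) w i) z = WZ (WZ (Fc f)) z i := rfl
      rw [e1, e2, wz_V hf z i, fzz_eq hf z i]
      rfl
    rw [hEw, codazzi_conj hf z i] at hwz
    exact hwz
  -- coefficients of the tangential expansion
  set E2 : ℂ := ((Real.exp (2 * ρ z) : ℝ) : ℂ) with hE2
  set A : ℂ := wirtZ α z - (1/2 : ℂ) * E2 * β z with hA
  set B : ℂ := α z + wirtZ γ z + 2 * dZ ρ z * γ z with hB
  set C : ℂ := wirtZ β z
      - (starRingEnd ℂ) c * (-((1/2 : ℂ) * E2 + 2 * (starRingEnd ℂ) (wirtZbar (dZ ρ) z)))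
    with hC
  have key : ∀ i : Fin (n + 1), c * WZ (Hopf f ρ) z i - γ z * Hopf f ρ z i
      = A * Fc f z i + B * WZ (Fc f) z i + C * WZb (Fc f) z i := by
    intro i
    have := hkey0 i
    rw [hA, hB, hC, hE2]
    linear_combination this
  have hveq : (fun i => c * WZ (Hopf f ρ) z i - γ z * Hopf f ρ z i)
      = fun i => A * Fc f z i + B * WZ (Fc f) z i + C * WZb (Fc f) z i := funext key
  have hLHS : ∀ X : Fin (n + 1) → ℂ,
      pairC (fun i => c * WZ (Hopf f ρ) z i - γ z * Hopf f ρ z i) X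
        = c * pairC (WZ (Hopf f ρ) z) X - γ z * pairC (Hopf f ρ z) X :=
    fun X => pairC_lin2 c (γ z) (WZ (Hopf f ρ) z) (Hopf f ρ z) X
  -- A = 0
  have hA0 : A = 0 := by
    have h := congrArg (fun Xv => pairC Xv (Fc f z)) hveq
    rw [hLHS (Fc f z), pairC_lin3, pair_OZ_F hf z, pair_Hopf_F hf z,
      pair_FF hf z, pairC_comm (WZ (Fc f) z) (Fc f z), pair_FU hf z,
      pairC_comm (WZb (Fc f) z) (Fc f z), pair_FV hf z] at h
    linear_combination -h
  -- B = 0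
  have hB0 : B = 0 := by
    have h := congrArg (fun Xv => pairC Xv (WZb (Fc f) z)) hveq
    rw [hLHS (WZb (Fc f) z), pairC_lin3, pair_OZ_V hf z, pair_Hopf_V hf z,
      pair_FV hf z, pair_UV hf z, pair_VV hf z] at h
    have h2 : B * ((1/2 : ℂ) * E2) = 0 := by rw [hE2]; linear_combination -h
    rcases mul_eq_zero.mp h2 with hB' | hE'
    · exact hB'
    · exfalso
      rcases mul_eq_zero.mp hE' with h' | h'
      · norm_num at h'
      · rw [hE2] at h'
        exact hE2ne h'
  -- C = 0
  have hC0 : C = 0 := by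
    have h := congrArg (fun Xv => pairC Xv (WZ (Fc f) z)) hveq
    rw [hLHS (WZ (Fc f) z), pair_OZ_U hf hiso z, pair_Hopf_U hf z, pairC_lin3,
      pair_FU hf z, pair_UU hf z,
      pairC_comm (WZb (Fc f) z) (WZ (Fc f) z), pair_UV hf z] at h
    have h2 : C * ((1/2 : ℂ) * E2) = 0 := by rw [hE2]; linear_combination -h
    rcases mul_eq_zero.mp h2 with hC' | hE'
    · exact hC'
    · exfalso
      rcases mul_eq_zero.mp hE' with h' | h'
      · norm_num at h'
      · rw [hE2] at h'
        exact hE2ne h'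
  constructor
  · intro i
    have hk := key i
    rw [hA0, hB0, hC0] at hk
    have hNZ : NZ f ρ (Hopf f ρ) z i = WZ (Hopf f ρ) z i := by
      simp only [NZ, hiso z]; ring
    rw [hNZ]
    have hγz : 2 * ((Real.exp (-2 * ρ z) : ℝ) : ℂ) * pairC (cV E) (WZb (Fc f) z) = γ z := rfl
    rw [hγz]
    linear_combination hk
  · have hsum : ∑ i, (c * Hopf f ρ z i
        + (starRingEnd ℂ) c * (starRingEnd ℂ) (Hopf f ρ z i) + Eperp f ρ E z i)
          * Hopf f ρ z i = 0 :=
      Finset.sum_eq_zero fun i _ => by rw [hdep z i, zero_mul]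
    have hexp : ∑ i, (c * Hopf f ρ z i
        + (starRingEnd ℂ) c * (starRingEnd ℂ) (Hopf f ρ z i) + Eperp f ρ E z i)
          * Hopf f ρ z i
        = c * pairC (Hopf f ρ z) (Hopf f ρ z)
          + (starRingEnd ℂ) c * pairC (conjV (Hopf f ρ z)) (Hopf f ρ z)
          + pairC (Eperp f ρ E z) (Hopf f ρ z) := by
      simp only [pairC, conjV, Finset.mul_sum, ← Finset.sum_add_distrib]
      exact Finset.sum_congr rfl fun i _ => by ring
    have hEp : pairC (Eperp f ρ E z) (Hopf f ρ z) = pairC (cV E) (Hopf f ρ z) := by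
      have : Eperp f ρ E z = fun i => cV E i - α z * Fc f z i - β z * WZb (Fc f) z i
          - γ z * WZ (Fc f) z i := funext fun i => hEdef z i
      rw [this, pairC_expand4, pairC_comm (Fc f z) (Hopf f ρ z), pair_Hopf_F hf z,
        pairC_comm (WZb (Fc f) z) (Hopf f ρ z), pair_Hopf_V hf z,
        pairC_comm (WZ (Fc f) z) (Hopf f ρ z), pair_Hopf_U hf z]
      ring
    rw [hexp, hiso z, hEp] at hsum
    linear_combination hsum
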